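/- arXiv:1610.07388 — 4 statements merged into one kernel-verified Lean document; each statement's English description precedes it below -/
import Mathlib

section
/- The Koczkodaj inconsistency ranking is the unique inconsistency ranking on the set of all pairwise comparison matrices (of all sizes n ≥ 3) satisfying positive responsiveness, invariance under inversion of preferences, homogeneous treatment of entities, scale invariance, monotonicity, and reducibility; that is, the Koczkodaj ranking satisfies all six axioms, and any inconsistency ranking satisfying all six axioms coincides with the Koczkodaj ranking. -/
open Matrix

/-- A pairwise comparison matrix (of size `n ≥ 3`): a positive reciprocal matrix. -/
structure PCM where
  n : ℕ
  hn : 3 ≤ n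
  A : Matrix (Fin n) (Fin n) ℝ
  pos : ∀ i j, 0 < A i j
  recip : ∀ i j, A j i = 1 / A i j

/-- Index triples `i < j < k`. -/
def triples (n : ℕ) : Finset (Fin n × Fin n × Fin n) :=
  Finset.univ.filter fun t => t.1 < t.2.1 ∧ t.2.1 < t.2.2

lemma triples_nonempty (n : ℕ) (hn : 3 ≤ n) : (triples n).Nonempty :=
  ⟨(⟨0, by omega⟩, ⟨1, by omega⟩, ⟨2, by omega⟩), by
    simp only [triples, Finset.mem_filter, Finset.mem_univ, true_and]
    exact ⟨Fin.mk_lt_mk.mpr (by omega), Fin.mk_lt_mk.mpr (by omega)⟩⟩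

/-- The Koczkodaj ratio `K(A) = max_{i<j<k} max{a_ij a_jk / a_ik, a_ik/(a_ij a_jk)}`. -/
noncomputable def KratioM {n : ℕ} (hn : 3 ≤ n) (A : Matrix (Fin n) (Fin n) ℝ) : ℝ :=
  (triples n).sup' (triples_nonempty n hn) fun t =>
    max (A t.1 t.2.1 * A t.2.1 t.2.2 / A t.1 t.2.2)
        (A t.1 t.2.2 / (A t.1 t.2.1 * A t.2.1 t.2.2))

noncomputable def Kratio (M : PCM) : ℝ := KratioM M.hn M.A

/-- The Koczkodaj inconsistency ranking: `A ⪰ᴷ B` iff `K(A) ≤ K(B)`. -/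
noncomputable def KRank (M N : PCM) : Prop := Kratio M ≤ Kratio N

/-- The triad `(t1; t2; t3)` as a 3×3 pairwise comparison matrix. -/
noncomputable def triad (t1 t2 t3 : ℝ) (h1 : 0 < t1) (h2 : 0 < t2) (h3 : 0 < t3) : PCM where
  n := 3
  hn := le_refl 3
  A := !![1, t1, t2; 1/t1, 1, t3; 1/t2, 1/t3, 1]
  pos := by
    intro i j
    fin_cases i <;> fin_cases j <;> simp <;> positivity
  recip := by
    intro i j
    fin_cases i <;> fin_cases j <;> simp [one_div_one_div]

/-- The transpose of a pairwise comparison matrix. -/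
def PCM.tr (M : PCM) : PCM where
  n := M.n
  hn := M.hn
  A := M.A.transpose
  pos := by intro i j; rw [Matrix.transpose_apply]; exact M.pos j i
  recip := by intro i j; rw [Matrix.transpose_apply, Matrix.transpose_apply]; exact M.recip j i

/-- The principal submatrix of `M` given by an index selection `σ`. -/
def subPCM (M : PCM) (m : ℕ) (hm : 3 ≤ m) (σ : Fin m → Fin M.n) : PCM where
  n := m
  hn := hm
  A := Matrix.of fun i j => M.A (σ i) (σ j)
  pos := fun i j => M.pos (σ i) (σ j)
  recip := fun i j => M.recip (σ i) (σ j)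

/-- `T` is a triad (3×3 pairwise comparison submatrix) of `M`. -/
def IsTriadOf (T M : PCM) : Prop :=
  ∃ σ : Fin 3 → Fin M.n, Function.Injective σ ∧ T = subPCM M 3 (le_refl 3) σ

/-- `B` is a pairwise comparison submatrix of `M` (of size `3 ≤ m < n`). -/
def IsSubPCM (B M : PCM) : Prop :=
  ∃ (m : ℕ) (hm : 3 ≤ m) (σ : Fin m → Fin M.n),
    m < M.n ∧ Function.Injective σ ∧ B = subPCM M m hm σ

/-- Equivalence (`∼`) derived from a ranking `⪰`. -/
def Sim (R : PCM → PCM → Prop) (M N : PCM) : Prop := R M N ∧ R N M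

/-- Strict relation (`≻`) derived from a ranking `⪰`. -/
def Strict (R : PCM → PCM → Prop) (M N : PCM) : Prop := R M N ∧ ¬ R N M

/-- An inconsistency ranking is a total and transitive relation. -/
def IsRanking (R : PCM → PCM → Prop) : Prop :=
  (∀ M N, R M N ∨ R N M) ∧ Transitive R

/-- Positive responsiveness. -/
noncomputable def PR (R : PCM → PCM → Prop) : Prop :=
  ∀ (s2 t2 : ℝ) (hs : 1 ≤ s2) (ht : 1 ≤ t2),
    (R (triad 1 s2 1 one_pos (lt_of_lt_of_le one_pos hs) one_pos)
       (triad 1 t2 1 one_pos (lt_of_lt_of_le one_pos ht) one_pos) ↔ s2 ≤ t2)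

/-- Invariance under inversion of preferences. -/
noncomputable def IIP (R : PCM → PCM → Prop) : Prop :=
  ∀ (t1 t2 t3 : ℝ) (h1 : 0 < t1) (h2 : 0 < t2) (h3 : 0 < t3),
    Sim R (triad t1 t2 t3 h1 h2 h3) (triad t1 t2 t3 h1 h2 h3).tr

/-- Homogeneous treatment of entities. -/
noncomputable def HTE (R : PCM → PCM → Prop) : Prop :=
  ∀ (t2 t3 : ℝ) (h2 : 0 < t2) (h3 : 0 < t3),
    Sim R (triad 1 t2 t3 one_pos h2 h3)
          (triad 1 (t2 / t3) 1 one_pos (div_pos h2 h3) one_pos)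

/-- Scale invariance. -/
noncomputable def SI (R : PCM → PCM → Prop) : Prop :=
  ∀ (t1 t2 t3 k : ℝ) (h1 : 0 < t1) (h2 : 0 < t2) (h3 : 0 < t3) (hk : 0 < k),
    Sim R (triad t1 t2 t3 h1 h2 h3)
          (triad (k * t1) (k ^ 2 * t2) (k * t3)
            (by positivity) (by positivity) (by positivity))

/-- Monotonicity: `A ⪯ T` for every triad `T` of `A`. -/
def MON (R : PCM → PCM → Prop) : Prop :=
  ∀ M T : PCM, IsTriadOf T M → R T M

/-- Reducibility: every pairwise comparison matrix is equivalent to one of its triads. -/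
def RED (R : PCM → PCM → Prop) : Prop :=
  ∀ M : PCM, ∃ T : PCM, IsTriadOf T M ∧ Sim R M T

/-- `min`-based variant of the Koczkodaj ratio. -/
noncomputable def KminM {n : ℕ} (hn : 3 ≤ n) (A : Matrix (Fin n) (Fin n) ℝ) : ℝ :=
  (triples n).inf' (triples_nonempty n hn) fun t =>
    max (A t.1 t.2.1 * A t.2.1 t.2.2 / A t.1 t.2.2)
        (A t.1 t.2.2 / (A t.1 t.2.1 * A t.2.1 t.2.2))

noncomputable def Kmin (M : PCM) : ℝ := KminM M.hn M.A

/-- Ranking of Example 1: `A ⪰¹ B` iff `Kmin A ≥ Kmin B`. -/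
noncomputable def Rank1 (M N : PCM) : Prop := Kmin N ≤ Kmin M

/-- Upper-triangle-only variant of the Koczkodaj ratio. -/
noncomputable def K2M {n : ℕ} (hn : 3 ≤ n) (A : Matrix (Fin n) (Fin n) ℝ) : ℝ :=
  (triples n).sup' (triples_nonempty n hn) fun t =>
    A t.1 t.2.1 * A t.2.1 t.2.2 / A t.1 t.2.2

noncomputable def K2 (M : PCM) : ℝ := K2M M.hn M.A

/-- Ranking of Example 2. -/
noncomputable def Rank2 (M N : PCM) : Prop := K2 M ≤ K2 N

noncomputable def K3M {n : ℕ} (hn : 3 ≤ n) (A : Matrix (Fin n) (Fin n) ℝ) : ℝ :=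
  (triples n).sup' (triples_nonempty n hn) fun t =>
    max (A t.2.1 t.2.2 ^ 2 / A t.1 t.2.2) (A t.1 t.2.2 / A t.2.1 t.2.2 ^ 2)

noncomputable def K3 (M : PCM) : ℝ := K3M M.hn M.A

/-- Ranking of Example 3. -/
noncomputable def Rank3 (M N : PCM) : Prop := K3 M ≤ K3 N

noncomputable def K4M {n : ℕ} (hn : 3 ≤ n) (A : Matrix (Fin n) (Fin n) ℝ) : ℝ :=
  (triples n).sup' (triples_nonempty n hn) fun t =>
    max (A t.2.1 t.2.2 / A t.1 t.2.2) (A t.1 t.2.2 / A t.2.1 t.2.2)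

noncomputable def K4 (M : PCM) : ℝ := K4M M.hn M.A

/-- Ranking of Example 4. -/
noncomputable def Rank4 (M N : PCM) : Prop := K4 M ≤ K4 N

/-- Ranking of Example 5: `A ⪰⁵ B` iff `Kmin A ≤ Kmin B`. -/
noncomputable def Rank5 (M N : PCM) : Prop := Kmin M ≤ Kmin N

/-- Ranking of Example 6: `A ⪰⁶ B` iff `K(A)ⁿ ≤ K(B)ᵐ`. -/
noncomputable def Rank6 (M N : PCM) : Prop := Kratio M ^ M.n ≤ Kratio N ^ N.n

/-- The Koczkodaj inconsistency index. -/
noncomputable def IKM {n : ℕ} (hn : 3 ≤ n) (A : Matrix (Fin n) (Fin n) ℝ) : ℝ :=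
  (triples n).sup' (triples_nonempty n hn) fun t =>
    min |1 - A t.1 t.2.2 / (A t.1 t.2.1 * A t.2.1 t.2.2)|
        |1 - A t.1 t.2.1 * A t.2.1 t.2.2 / A t.1 t.2.2|

noncomputable def IK (M : PCM) : ℝ := IKM M.hn M.A


/-! ### Auxiliary lemmas -/

lemma PCM.ext' {M N : PCM} (h : M.n = N.n) (hA : HEq M.A N.A) : M = N := by
  cases M; cases N
  dsimp at h
  subst h
  dsimp at hA
  rw [heq_eq_eq] at hA
  subst hA
  rfl

lemma PCM.diag (M : PCM) (i : Fin M.n) : M.A i i = 1 := by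
  have h := M.recip i i
  have hp := M.pos i i
  have h2 : M.A i i * M.A i i = 1 := by
    field_simp at h
    nlinarith
  nlinarith [sq_nonneg (M.A i i - 1)]

lemma triples_mem_three : ∀ b : Fin 3 × Fin 3 × Fin 3, b ∈ triples 3 → b = (0, 1, 2) := by
  decide

lemma mem_triples_012 : ((0 : Fin 3), (1 : Fin 3), (2 : Fin 3)) ∈ triples 3 := by decide

lemma KratioM_three (h : (3:ℕ) ≤ 3) (A : Matrix (Fin 3) (Fin 3) ℝ) :
    KratioM h A = max (A 0 1 * A 1 2 / A 0 2) (A 0 2 / (A 0 1 * A 1 2)) := by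
  unfold KratioM
  apply le_antisymm
  · apply Finset.sup'_le
    intro b hb
    have hb2 := triples_mem_three b hb
    subst hb2
    exact le_rfl
  · exact Finset.le_sup'
      (fun t => max (A t.1 t.2.1 * A t.2.1 t.2.2 / A t.1 t.2.2)
        (A t.1 t.2.2 / (A t.1 t.2.1 * A t.2.1 t.2.2))) mem_triples_012

lemma triad_congr {a b c a' b' c' : ℝ} (ha : a = a') (hb : b = b') (hc : c = c')
    (h1 : 0 < a) (h2 : 0 < b) (h3 : 0 < c) (h1' : 0 < a') (h2' : 0 < b') (h3' : 0 < c') :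
    triad a b c h1 h2 h3 = triad a' b' c' h1' h2' h3' := by
  subst ha; subst hb; subst hc; rfl

lemma Kratio_triad (t1 t2 t3 : ℝ) (h1 : 0 < t1) (h2 : 0 < t2) (h3 : 0 < t3) :
    Kratio (triad t1 t2 t3 h1 h2 h3) = max (t1 * t3 / t2) (t2 / (t1 * t3)) := by
  unfold Kratio triad
  rw [KratioM_three]
  simp

lemma one_le_maxpair {a b c : ℝ} (ha : 0 < a) (hb : 0 < b) (hc : 0 < c) :
    1 ≤ max (a * b / c) (c / (a * b)) := by
  rcases le_total c (a * b) with h | h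
  · exact le_max_of_le_left ((one_le_div hc).mpr h)
  · exact le_max_of_le_right ((one_le_div (by positivity)).mpr h)

lemma one_le_Kratio (M : PCM) : 1 ≤ Kratio M := by
  unfold Kratio KratioM
  obtain ⟨t, ht⟩ := triples_nonempty M.n M.hn
  refine le_trans (one_le_maxpair (M.pos t.1 t.2.1) (M.pos t.2.1 t.2.2) (M.pos t.1 t.2.2))
    (Finset.le_sup'
      (fun t => max (M.A t.1 t.2.1 * M.A t.2.1 t.2.2 / M.A t.1 t.2.2)
        (M.A t.1 t.2.2 / (M.A t.1 t.2.1 * M.A t.2.1 t.2.2))) ht)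

lemma Kratio_pos (M : PCM) : 0 < Kratio M := lt_of_lt_of_le one_pos (one_le_Kratio M)

lemma fval_swap12 (M : PCM) (i j k : Fin M.n) :
    max (M.A i j * M.A j k / M.A i k) (M.A i k / (M.A i j * M.A j k)) =
    max (M.A j i * M.A i k / M.A j k) (M.A j k / (M.A j i * M.A i k)) := by
  have pij := M.pos i j; have pik := M.pos i k; have pjk := M.pos j k
  rw [M.recip i j, max_comm]
  congr 1 <;> field_simp <;> first | ring | simp

lemma fval_swap23 (M : PCM) (i j k : Fin M.n) :
    max (M.A i j * M.A j k / M.A i k) (M.A i k / (M.A i j * M.A j k)) =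
    max (M.A i k * M.A k j / M.A i j) (M.A i j / (M.A i k * M.A k j)) := by
  have pij := M.pos i j; have pik := M.pos i k; have pjk := M.pos j k
  rw [M.recip j k, max_comm]
  congr 1
  · rw [mul_one_div, div_div, mul_comm (M.A i j)]
  · rw [mul_one_div, div_div_eq_mul_div]

lemma fval_le_Kratio (M : PCM) (i j k : Fin M.n) (hij : i ≠ j) (hik : i ≠ k) (hjk : j ≠ k) :
    max (M.A i j * M.A j k / M.A i k) (M.A i k / (M.A i j * M.A j k)) ≤ Kratio M := by
  have base : ∀ a b c : Fin M.n, a < b → b < c →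
      max (M.A a b * M.A b c / M.A a c) (M.A a c / (M.A a b * M.A b c)) ≤ Kratio M := by
    intro a b c hab hbc
    have hmem : (a, b, c) ∈ triples M.n := by
      simp only [triples, Finset.mem_filter, Finset.mem_univ, true_and]
      exact ⟨hab, hbc⟩
    exact Finset.le_sup'
      (fun t => max (M.A t.1 t.2.1 * M.A t.2.1 t.2.2 / M.A t.1 t.2.2)
        (M.A t.1 t.2.2 / (M.A t.1 t.2.1 * M.A t.2.1 t.2.2))) hmem
  rcases lt_or_gt_of_ne hij with h1 | h1 <;> rcases lt_or_gt_of_ne hik with h2 | h2 <;>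
    rcases lt_or_gt_of_ne hjk with h3 | h3
  · exact base i j k h1 h3
  · rw [fval_swap23]; exact base i k j h2 h3
  · exact absurd (lt_trans h1 h3) (not_lt.mpr h2.le)
  · rw [fval_swap23, fval_swap12]; exact base k i j h2 h1
  · rw [fval_swap12]; exact base j i k h1 h2
  · exact absurd (lt_trans h3 h1) (not_lt.mpr h2.le)
  · rw [fval_swap12, fval_swap23]; exact base j k i h3 h2
  · rw [fval_swap23, fval_swap12, fval_swap23]; exact base k j i h3 h1

lemma triad_tr (t1 t2 t3 : ℝ) (h1 : 0 < t1) (h2 : 0 < t2) (h3 : 0 < t3) :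
    (triad t1 t2 t3 h1 h2 h3).tr =
      triad (1/t1) (1/t2) (1/t3) (by positivity) (by positivity) (by positivity) := by
  refine PCM.ext' (by rfl) ?_
  apply heq_of_eq
  funext i j
  fin_cases i <;> fin_cases j <;>
    simp [PCM.tr, triad, Matrix.transpose_apply, one_div_one_div]

lemma subPCM3_eq_triad (M : PCM) (σ : Fin 3 → Fin M.n) :
    subPCM M 3 (le_refl 3) σ =
      triad (M.A (σ 0) (σ 1)) (M.A (σ 0) (σ 2)) (M.A (σ 1) (σ 2))
        (M.pos _ _) (M.pos _ _) (M.pos _ _) := by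
  refine PCM.ext' (by rfl) ?_
  apply heq_of_eq
  funext i j
  have e10 : M.A (σ 1) (σ 0) = 1 / M.A (σ 0) (σ 1) := M.recip _ _
  have e20 : M.A (σ 2) (σ 0) = 1 / M.A (σ 0) (σ 2) := M.recip _ _
  have e21 : M.A (σ 2) (σ 1) = 1 / M.A (σ 1) (σ 2) := M.recip _ _
  fin_cases i <;> fin_cases j <;>
    simp [subPCM, triad, PCM.diag, e10, e20, e21]

lemma Kratio_le_of_triad (M T : PCM) (h : IsTriadOf T M) : Kratio T ≤ Kratio M := by
  obtain ⟨σ, hinj, rfl⟩ := h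
  have h01 : σ 0 ≠ σ 1 := fun h => absurd (hinj h) (by decide)
  have h02 : σ 0 ≠ σ 2 := fun h => absurd (hinj h) (by decide)
  have h12 : σ 1 ≠ σ 2 := fun h => absurd (hinj h) (by decide)
  have : Kratio (subPCM M 3 (le_refl 3) σ) =
      max (M.A (σ 0) (σ 1) * M.A (σ 1) (σ 2) / M.A (σ 0) (σ 2))
        (M.A (σ 0) (σ 2) / (M.A (σ 0) (σ 1) * M.A (σ 1) (σ 2))) := by
    show KratioM (le_refl 3) (Matrix.of fun i j => M.A (σ i) (σ j)) = _
    rw [KratioM_three]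
    simp [subPCM]
  rw [this]
  exact fval_le_Kratio M _ _ _ h01 h02 h12

lemma cons3_injective {n : ℕ} {i j k : Fin n} (hij : i < j) (hjk : j < k) :
    Function.Injective ![i, j, k] := by
  have hik : i < k := lt_trans hij hjk
  intro a b hab
  fin_cases a <;> fin_cases b <;> simp_all <;>
    first
      | rfl
      | exact absurd hab (ne_of_lt hij)
      | exact absurd hab (ne_of_gt hij)
      | exact absurd hab (ne_of_lt hjk)
      | exact absurd hab (ne_of_gt hjk)
      | exact absurd hab (ne_of_lt hik)
      | exact absurd hab (ne_of_gt hik)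

lemma exists_max_triad (M : PCM) : ∃ T : PCM, IsTriadOf T M ∧ Kratio T = Kratio M := by
  obtain ⟨t, ht, heq⟩ := Finset.exists_mem_eq_sup' (triples_nonempty M.n M.hn)
    (fun t => max (M.A t.1 t.2.1 * M.A t.2.1 t.2.2 / M.A t.1 t.2.2)
      (M.A t.1 t.2.2 / (M.A t.1 t.2.1 * M.A t.2.1 t.2.2)))
  obtain ⟨i, j, k⟩ := t
  simp only [triples, Finset.mem_filter, Finset.mem_univ, true_and] at ht
  obtain ⟨hij, hjk⟩ := ht
  refine ⟨subPCM M 3 (le_refl 3) ![i, j, k], ⟨![i, j, k], cons3_injective hij hjk, rfl⟩, ?_⟩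
  have : Kratio (subPCM M 3 (le_refl 3) ![i, j, k]) =
      max (M.A i j * M.A j k / M.A i k) (M.A i k / (M.A i j * M.A j k)) := by
    show KratioM (le_refl 3) (Matrix.of fun a b => M.A (![i, j, k] a) (![i, j, k] b)) = _
    rw [KratioM_three]
    simp [subPCM]
  rw [this]
  exact heq.symm

lemma sim_KRank_of_eq {M N : PCM} (h : Kratio M = Kratio N) : Sim KRank M N :=
  ⟨le_of_eq h, le_of_eq h.symm⟩

lemma KRank_isRanking : IsRanking KRank :=
  ⟨fun M N => le_total _ _, fun _ _ _ h1 h2 => le_trans h1 h2⟩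

lemma KRank_PR : PR KRank := by
  intro s2 t2 hs ht
  unfold KRank
  rw [Kratio_triad, Kratio_triad]
  have e : ∀ u : ℝ, 1 ≤ u → max (1 * 1 / u) (u / (1 * 1)) = u := by
    intro u hu
    rw [one_mul, div_one]
    exact max_eq_right (le_trans (by rw [div_le_one (by linarith)]; linarith) hu)
  rw [e s2 hs, e t2 ht]

lemma KRank_IIP : IIP KRank := by
  intro t1 t2 t3 h1 h2 h3
  apply sim_KRank_of_eq
  rw [triad_tr, Kratio_triad, Kratio_triad, max_comm]
  congr 1
  · field_simp
  · field_simp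

lemma KRank_HTE : HTE KRank := by
  intro t2 t3 h2 h3
  apply sim_KRank_of_eq
  rw [Kratio_triad, Kratio_triad]
  congr 1
  · field_simp
  · field_simp

lemma KRank_SI : SI KRank := by
  intro t1 t2 t3 k h1 h2 h3 hk
  apply sim_KRank_of_eq
  rw [Kratio_triad, Kratio_triad]
  congr 1
  · field_simp
  · field_simp

lemma KRank_MON : MON KRank := fun M T h => Kratio_le_of_triad M T h

lemma KRank_RED : RED KRank := by
  intro M
  obtain ⟨T, hT, hK⟩ := exists_max_triad M
  exact ⟨T, hT, sim_KRank_of_eq hK.symm⟩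

lemma sim_trans {R : PCM → PCM → Prop} (htr : Transitive R) {M N P : PCM}
    (h1 : Sim R M N) (h2 : Sim R N P) : Sim R M P :=
  ⟨htr h1.1 h2.1, htr h2.2 h1.2⟩

lemma sim_inv {R : PCM → PCM → Prop} (hiip : IIP R) (u : ℝ) (hu : 0 < u) :
    Sim R (triad 1 u 1 one_pos hu one_pos)
      (triad 1 (1/u) 1 one_pos (by positivity) one_pos) := by
  have h := hiip 1 u 1 one_pos hu one_pos
  rw [triad_tr] at h
  rw [triad_congr (show (1:ℝ)/1 = 1 by norm_num) rfl (show (1:ℝ)/1 = 1 by norm_num)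
    (by positivity) (by positivity) (by positivity) one_pos (by positivity) one_pos] at h
  exact h

lemma sim_triad_max {R : PCM → PCM → Prop} (htr : Transitive R) (hiip : IIP R)
    (hhte : HTE R) (hsi : SI R) (t1 t2 t3 : ℝ) (h1 : 0 < t1) (h2 : 0 < t2) (h3 : 0 < t3)
    (m : ℝ) (hm : m = max (t1 * t3 / t2) (t2 / (t1 * t3))) (hm0 : 0 < m) :
    Sim R (triad t1 t2 t3 h1 h2 h3) (triad 1 m 1 one_pos hm0 one_pos) := by
  have s1 := hsi t1 t2 t3 (1/t1) h1 h2 h3 (by positivity)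
  rw [triad_congr (show 1/t1*t1 = 1 by field_simp)
    (show (1/t1)^2*t2 = t2/t1^2 by field_simp)
    (show 1/t1*t3 = t3/t1 by ring)
    (by positivity) (by positivity) (by positivity)
    one_pos (by positivity) (by positivity)] at s1
  have s2 := hhte (t2/t1^2) (t3/t1) (by positivity) (by positivity)
  rw [triad_congr rfl (show (t2/t1^2)/(t3/t1) = t2/(t1*t3) by field_simp) rfl
    one_pos (by positivity) one_pos one_pos (by positivity) one_pos] at s2
  have s3 : Sim R (triad t1 t2 t3 h1 h2 h3)
      (triad 1 (t2/(t1*t3)) 1 one_pos (by positivity) one_pos) := sim_trans htr s1 s2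
  rcases max_cases (t1*t3/t2) (t2/(t1*t3)) with ⟨hmax, _⟩ | ⟨hmax, _⟩
  · have s4 := sim_inv hiip (t2/(t1*t3)) (by positivity)
    have e : (1:ℝ)/(t2/(t1*t3)) = m := by rw [hm, hmax, one_div_div]
    rw [triad_congr rfl e rfl one_pos (by positivity) one_pos one_pos hm0 one_pos] at s4
    exact sim_trans htr s3 s4
  · have e : t2/(t1*t3) = m := by rw [hm, hmax]
    rw [triad_congr rfl e rfl one_pos (by positivity) one_pos one_pos hm0 one_pos] at s3
    exact s3

lemma sim_norm {R : PCM → PCM → Prop} (hrank : IsRanking R) (hpr : PR R) (hiip : IIP R)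
    (hhte : HTE R) (hsi : SI R) (hmon : MON R) (hred : RED R) (M : PCM) :
    Sim R M (triad 1 (Kratio M) 1 one_pos (Kratio_pos M) one_pos) := by
  have htr := hrank.2
  have key : ∀ T : PCM, IsTriadOf T M →
      Sim R T (triad 1 (Kratio T) 1 one_pos (Kratio_pos T) one_pos) := by
    intro T hT
    obtain ⟨σ, hinj, rfl⟩ := hT
    rw [subPCM3_eq_triad M σ]
    exact sim_triad_max htr hiip hhte hsi _ _ _ (M.pos _ _) (M.pos _ _) (M.pos _ _)
      (Kratio _) (Kratio_triad _ _ _ _ _ _) (Kratio_pos _)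
  obtain ⟨T0, hT0, hsim0⟩ := hred M
  have sT0 := key T0 hT0
  have hle : Kratio T0 ≤ Kratio M := Kratio_le_of_triad M T0 hT0
  obtain ⟨Ts, hTs, hKs⟩ := exists_max_triad M
  have sTs := key Ts hTs
  have hR : R (triad 1 (Kratio Ts) 1 one_pos (Kratio_pos Ts) one_pos)
      (triad 1 (Kratio T0) 1 one_pos (Kratio_pos T0) one_pos) :=
    htr (htr (htr sTs.2 (hmon M Ts hTs)) hsim0.1) sT0.1
  have hge : Kratio M ≤ Kratio T0 := by
    have h := (hpr (Kratio Ts) (Kratio T0) (one_le_Kratio Ts) (one_le_Kratio T0)).mp hR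
    rw [hKs] at h
    exact h
  have heq : Kratio T0 = Kratio M := le_antisymm hle hge
  have hfin : Sim R M (triad 1 (Kratio T0) 1 one_pos (Kratio_pos T0) one_pos) :=
    sim_trans htr hsim0 sT0
  rw [triad_congr rfl heq rfl one_pos (Kratio_pos T0) one_pos
    one_pos (Kratio_pos M) one_pos] at hfin
  exact hfin

/-- **Theorem 1** (Csató): the Koczkodaj inconsistency ranking is the unique inconsistency
ranking satisfying `PR`, `IIP`, `HTE`, `SI`, `MON` and `RED`. -/
theorem koczkodaj_ranking_characterization :
    (IsRanking KRank ∧ PR KRank ∧ IIP KRank ∧ HTE KRank ∧ SI KRank ∧ MON KRank ∧ RED KRank) ∧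
    (∀ R : PCM → PCM → Prop, IsRanking R →
      PR R → IIP R → HTE R → SI R → MON R → RED R →
      ∀ M N : PCM, R M N ↔ KRank M N) := by
  refine ⟨⟨KRank_isRanking, KRank_PR, KRank_IIP, KRank_HTE, KRank_SI, KRank_MON, KRank_RED⟩, ?_⟩
  intro R hrank hpr hiip hhte hsi hmon hred M N
  have htr := hrank.2
  have sM := sim_norm hrank hpr hiip hhte hsi hmon hred M
  have sN := sim_norm hrank hpr hiip hhte hsi hmon hred N
  constructor
  · intro h
    have hRtri : R (triad 1 (Kratio M) 1 one_pos (Kratio_pos M) one_pos)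
        (triad 1 (Kratio N) 1 one_pos (Kratio_pos N) one_pos) :=
      htr (htr sM.2 h) sN.1
    exact (hpr (Kratio M) (Kratio N) (one_le_Kratio M) (one_le_Kratio N)).mp hRtri
  · intro h
    have hRtri := (hpr (Kratio M) (Kratio N) (one_le_Kratio M) (one_le_Kratio N)).mpr h
    exact htr (htr sM.1 hRtri) sN.2
end

section
/- The inconsistency ranking ⪰¹ defined by A ⪰¹ B iff min_{i<j<k} max{ a_ij a_jk / a_ik , a_ik / (a_ij a_jk) } ≥ min_{i<j<k} max{ b_ij b_jk / b_ik , b_ik / (b_ij b_jk) } satisfies invariance under inversion of preferences, homogeneous treatment of entities, scale invariance, monotonicity and reducibility, but fails positive responsiveness. -/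
open Matrix

/-- local value of a triple -/
noncomputable def fVal {n : ℕ} (A : Matrix (Fin n) (Fin n) ℝ) (i j k : Fin n) : ℝ :=
  max (A i j * A j k / A i k) (A i k / (A i j * A j k))

lemma KminM_three (A : Matrix (Fin 3) (Fin 3) ℝ) :
    KminM (le_refl 3) A = fVal A 0 1 2 := by
  have hset : triples 3 = {((0 : Fin 3), (1 : Fin 3), (2 : Fin 3))} := by decide
  unfold KminM fVal
  apply le_antisymm
  · exact Finset.inf'_le (b := ((0 : Fin 3), (1 : Fin 3), (2 : Fin 3))) _
      (by rw [hset]; exact Finset.mem_singleton_self _)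
  · apply Finset.le_inf'
    intro t ht
    have : t = ((0 : Fin 3), (1 : Fin 3), (2 : Fin 3)) := by
      rw [hset] at ht; exact Finset.mem_singleton.mp ht
    subst this
    exact le_refl _

lemma fVal_swap12 (M : PCM) (i j k : Fin M.n) :
    fVal M.A j i k = fVal M.A i j k := by
  have ha := M.pos i j; have hb := M.pos j k; have hc := M.pos i k
  unfold fVal
  rw [M.recip i j, max_comm, div_mul_eq_mul_div, one_mul, div_div,
    div_div_eq_mul_div, mul_comm (M.A j k) (M.A i j)]

lemma fVal_swap23 (M : PCM) (i j k : Fin M.n) :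
    fVal M.A i k j = fVal M.A i j k := by
  have ha := M.pos i j; have hb := M.pos j k; have hc := M.pos i k
  unfold fVal
  rw [M.recip j k, max_comm, mul_one_div, div_div, div_div_eq_mul_div,
    mul_comm (M.A j k) (M.A i j)]

lemma Kmin_le_fVal (M : PCM) (i j k : Fin M.n) (hij : i < j) (hjk : j < k) :
    Kmin M ≤ fVal M.A i j k := by
  unfold Kmin KminM
  exact Finset.inf'_le (b := (i, j, k)) _ (by
    unfold triples
    exact Finset.mem_filter.mpr ⟨Finset.mem_univ _, hij, hjk⟩)

lemma Kmin_le_fVal' (M : PCM) (i j k : Fin M.n) (hij : i ≠ j) (hjk : j ≠ k)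
    (hik : i ≠ k) : Kmin M ≤ fVal M.A i j k := by
  rcases lt_trichotomy i j with h1 | h1 | h1
  · rcases lt_trichotomy j k with h2 | h2 | h2
    · exact Kmin_le_fVal M i j k h1 h2
    · exact absurd h2 hjk
    · rcases lt_trichotomy i k with h3 | h3 | h3
      · rw [fVal_swap23 M i k j]; exact Kmin_le_fVal M i k j h3 h2
      · exact absurd h3 hik
      · rw [fVal_swap23 M i k j, fVal_swap12 M k i j]
        exact Kmin_le_fVal M k i j h3 h1
  · exact absurd h1 hij
  · rcases lt_trichotomy j k with h2 | h2 | h2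
    · rcases lt_trichotomy i k with h3 | h3 | h3
      · rw [fVal_swap12 M j i k]; exact Kmin_le_fVal M j i k h1 h3
      · exact absurd h3 hik
      · rw [fVal_swap12 M j i k, fVal_swap23 M j k i]
        exact Kmin_le_fVal M j k i h2 h3
    · exact absurd h2 hjk
    · rw [fVal_swap12 M j i k, fVal_swap23 M j k i, fVal_swap12 M k j i]
      exact Kmin_le_fVal M k j i h2 h1

lemma Kmin_triad (t1 t2 t3 : ℝ) (h1 : 0 < t1) (h2 : 0 < t2) (h3 : 0 < t3) :
    Kmin (triad t1 t2 t3 h1 h2 h3) = max (t1 * t3 / t2) (t2 / (t1 * t3)) := by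
  have h : Kmin (triad t1 t2 t3 h1 h2 h3)
      = KminM (le_refl 3) !![1, t1, t2; 1/t1, 1, t3; 1/t2, 1/t3, 1] := rfl
  rw [h, KminM_three]
  unfold fVal
  norm_num [Matrix.cons_val_two, Matrix.tail_cons, Matrix.head_cons]

lemma Kmin_triad_tr (t1 t2 t3 : ℝ) (h1 : 0 < t1) (h2 : 0 < t2) (h3 : 0 < t3) :
    Kmin (triad t1 t2 t3 h1 h2 h3).tr = max (t1 * t3 / t2) (t2 / (t1 * t3)) := by
  have h : Kmin (triad t1 t2 t3 h1 h2 h3).tr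
      = KminM (le_refl 3) (!![1, t1, t2; 1/t1, 1, t3; 1/t2, 1/t3, 1])ᵀ := rfl
  rw [h, KminM_three]
  unfold fVal
  simp only [Matrix.transpose_apply]
  norm_num [Matrix.cons_val_two, Matrix.tail_cons, Matrix.head_cons]
  rw [max_comm]
  congr 1 <;> (field_simp; try ring)

lemma Kmin_sub (M : PCM) (σ : Fin 3 → Fin M.n) :
    Kmin (subPCM M 3 (le_refl 3) σ) = fVal M.A (σ 0) (σ 1) (σ 2) := by
  have h : Kmin (subPCM M 3 (le_refl 3) σ)
      = KminM (le_refl 3) (Matrix.of fun i j => M.A (σ i) (σ j)) := rfl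
  rw [h, KminM_three]
  rfl

/-- Example 1: the ranking `⪰¹` satisfies `IIP`, `HTE`, `SI`, `MON` and `RED`,
but fails `PR`. -/
theorem rank1_properties :
    IIP Rank1 ∧ HTE Rank1 ∧ SI Rank1 ∧ MON Rank1 ∧ RED Rank1 ∧ ¬ PR Rank1 := by
  refine ⟨?_, ?_, ?_, ?_, ?_, ?_⟩
  · -- IIP
    intro t1 t2 t3 h1 h2 h3
    have key : Kmin (triad t1 t2 t3 h1 h2 h3).tr = Kmin (triad t1 t2 t3 h1 h2 h3) := by
      rw [Kmin_triad, Kmin_triad_tr]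
    exact ⟨le_of_eq key, le_of_eq key.symm⟩
  · -- HTE
    intro t2 t3 h2 h3
    have key : Kmin (triad 1 (t2 / t3) 1 one_pos (div_pos h2 h3) one_pos)
        = Kmin (triad 1 t2 t3 one_pos h2 h3) := by
      rw [Kmin_triad, Kmin_triad]
      norm_num [one_div_div]
    exact ⟨le_of_eq key, le_of_eq key.symm⟩
  · -- SI
    intro t1 t2 t3 k h1 h2 h3 hk
    have key : Kmin (triad (k * t1) (k ^ 2 * t2) (k * t3)
          (by positivity) (by positivity) (by positivity))
        = Kmin (triad t1 t2 t3 h1 h2 h3) := by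
      rw [Kmin_triad, Kmin_triad]
      congr 1 <;> (field_simp; try ring)
    exact ⟨le_of_eq key, le_of_eq key.symm⟩
  · -- MON
    intro M T hT
    obtain ⟨σ, hσ, rfl⟩ := hT
    show Kmin M ≤ Kmin (subPCM M 3 (le_refl 3) σ)
    rw [Kmin_sub]
    exact Kmin_le_fVal' M (σ 0) (σ 1) (σ 2)
      (fun e => absurd (hσ e) (by decide))
      (fun e => absurd (hσ e) (by decide))
      (fun e => absurd (hσ e) (by decide))
  · -- RED
    intro M
    obtain ⟨t, ht, hval⟩ :=
      Finset.exists_mem_eq_inf' (triples_nonempty M.n M.hn)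
        (fun t : Fin M.n × Fin M.n × Fin M.n =>
          max (M.A t.1 t.2.1 * M.A t.2.1 t.2.2 / M.A t.1 t.2.2)
              (M.A t.1 t.2.2 / (M.A t.1 t.2.1 * M.A t.2.1 t.2.2)))
    have hmem : t.1 < t.2.1 ∧ t.2.1 < t.2.2 := by
      have := ht
      unfold triples at this
      exact (Finset.mem_filter.mp this).2
    obtain ⟨h12, h23⟩ := hmem
    have h13 := h12.trans h23
    set σ : Fin 3 → Fin M.n := ![t.1, t.2.1, t.2.2] with hσdef
    have hinj : Function.Injective σ := by
      intro a b hab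
      fin_cases a <;> fin_cases b <;>
        simp only [hσdef, Matrix.cons_val_zero, Matrix.cons_val_one,
          Matrix.head_cons, Matrix.cons_val_two, Matrix.tail_cons] at hab <;>
        first
          | rfl
          | exact absurd hab (ne_of_lt (by assumption))
          | exact absurd hab.symm (ne_of_lt (by assumption))
    have hKT : Kmin (subPCM M 3 (le_refl 3) σ) = Kmin M := by
      rw [Kmin_sub]
      have hσ0 : σ 0 = t.1 := rfl
      have hσ1 : σ 1 = t.2.1 := rfl
      have hσ2 : σ 2 = t.2.2 := rfl
      rw [hσ0, hσ1, hσ2]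
      exact hval.symm
    exact ⟨subPCM M 3 (le_refl 3) σ, ⟨σ, hinj, rfl⟩,
      le_of_eq hKT, le_of_eq hKT.symm⟩
  · -- ¬ PR
    intro h
    have h2 := (h 1 2 le_rfl (by norm_num)).mpr (by norm_num)
    unfold Rank1 at h2
    rw [Kmin_triad, Kmin_triad] at h2
    norm_num at h2
end

section
/- Monotonicity and reducibility together imply monotonicity with respect to all pairwise comparison submatrices: if an inconsistency ranking ⪰ satisfies MON and RED, then for every pairwise comparison matrix A of size n ≥ 3 and every pairwise comparison submatrix B of A of size m with 3 ≤ m < n, one has A ⪯ B. -/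
open Matrix

/-- `MON` and `RED` together imply monotonicity with respect to all pairwise comparison
submatrices: `A ⪯ B` for every pairwise comparison submatrix `B` of `A`. -/
theorem mon_red_imply_submatrix_monotonicity :
    ∀ R : PCM → PCM → Prop, IsRanking R → MON R → RED R →
      ∀ M B : PCM, IsSubPCM B M → R B M := by
  intro R hR hMON hRED M B hB
  obtain ⟨m, hm, σ, hmn, hσ, rfl⟩ := hB
  obtain ⟨T, ⟨τ, hτ, rfl⟩, hsim⟩ := hRED (subPCM M m hm σ)
  have hTM : IsTriadOf (subPCM (subPCM M m hm σ) 3 (le_refl 3) τ) M :=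
    ⟨σ ∘ τ, hσ.comp hτ, rfl⟩
  exact hR.2 hsim.1 (hMON M _ hTM)
end

section
/- For every triad T = (t1; t2; t3) (so t1, t2, t3 > 0), the Koczkodaj inconsistency index satisfies I^K(T) = 1 − 1/x where x = max{ t1 t3 / t2 , t2 / (t1 t3) }; consequently, for triads S and T, I^K(S) ≤ I^K(T) if and only if max{ s1 s3 / s2 , s2 / (s1 s3) } ≤ max{ t1 t3 / t2 , t2 / (t1 t3) }, i.e. the Koczkodaj inconsistency index induces the Koczkodaj inconsistency ranking on triads. -/
open Matrix

lemma two_le_add_inv {u : ℝ} (hu : 0 < u) : 2 ≤ u + u⁻¹ := by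
  nlinarith [mul_nonneg (sq_nonneg (u - 1)) (le_of_lt (inv_pos.mpr hu)),
    mul_inv_cancel₀ hu.ne', sq_nonneg (u - 1)]

lemma key_min (u : ℝ) (hu : 0 < u) :
    min |1 - u⁻¹| |1 - u| = 1 - 1 / max u u⁻¹ := by
  have hadd := two_le_add_inv hu
  rcases le_total 1 u with h | h
  · have hi : u⁻¹ ≤ 1 := by
      rw [inv_le_one_iff₀]; right; exact h
    rw [max_eq_left (hi.trans h), abs_of_nonneg (by linarith), abs_of_nonpos (by linarith),
      min_eq_left (by linarith), one_div]
  · have hi : 1 ≤ u⁻¹ := by rw [le_inv_comm₀ one_pos hu]; simpa using h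
    rw [max_eq_right (h.trans hi), abs_of_nonpos (by linarith), abs_of_nonneg (by linarith),
      min_eq_right (by linarith), one_div, inv_inv]

lemma one_le_max_inv (u : ℝ) (hu : 0 < u) : 1 ≤ max u u⁻¹ := by
  rcases le_total 1 u with h | h
  · exact h.trans (le_max_left _ _)
  · have : 1 ≤ u⁻¹ := by rw [le_inv_comm₀ one_pos hu]; simpa using h
    exact this.trans (le_max_right _ _)

lemma triples_three : triples 3 = {((0 : Fin 3), (1 : Fin 3), (2 : Fin 3))} := by decide

lemma IK_triad (t1 t2 t3 : ℝ) (h1 : 0 < t1) (h2 : 0 < t2) (h3 : 0 < t3) :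
    IK (triad t1 t2 t3 h1 h2 h3) =
      1 - 1 / max (t1 * t3 / t2) (t2 / (t1 * t3)) := by
  have hinv : t2 / (t1 * t3) = (t1 * t3 / t2)⁻¹ := by rw [inv_div]
  have hmin : IK (triad t1 t2 t3 h1 h2 h3) =
      min |1 - t2 / (t1 * t3)| |1 - t1 * t3 / t2| := by
    simp [IK, IKM, triad, triples_three]
  rw [hmin, hinv, key_min _ (by positivity)]

/-- For every triad `T = (t1; t2; t3)` the Koczkodaj inconsistency index equals `1 - 1/x`
where `x = max{t1 t3 / t2, t2 / (t1 t3)}`; consequently the index induces the Koczkodaj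
inconsistency ranking on triads. -/
theorem koczkodaj_index_on_triads :
    (∀ (t1 t2 t3 : ℝ) (h1 : 0 < t1) (h2 : 0 < t2) (h3 : 0 < t3),
      IK (triad t1 t2 t3 h1 h2 h3) = 1 - 1 / max (t1 * t3 / t2) (t2 / (t1 * t3))) ∧
    (∀ (s1 s2 s3 : ℝ) (g1 : 0 < s1) (g2 : 0 < s2) (g3 : 0 < s3)
       (t1 t2 t3 : ℝ) (h1 : 0 < t1) (h2 : 0 < t2) (h3 : 0 < t3),
      IK (triad s1 s2 s3 g1 g2 g3) ≤ IK (triad t1 t2 t3 h1 h2 h3) ↔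
        max (s1 * s3 / s2) (s2 / (s1 * s3)) ≤ max (t1 * t3 / t2) (t2 / (t1 * t3))) := by
  constructor
  · exact IK_triad
  · intro s1 s2 s3 g1 g2 g3 t1 t2 t3 h1 h2 h3
    rw [IK_triad, IK_triad]
    have hs : (1 : ℝ) ≤ max (s1 * s3 / s2) (s2 / (s1 * s3)) := by
      rw [show s2 / (s1 * s3) = (s1 * s3 / s2)⁻¹ by rw [inv_div]]
      exact one_le_max_inv _ (by positivity)
    have ht : (1 : ℝ) ≤ max (t1 * t3 / t2) (t2 / (t1 * t3)) := by
      rw [show t2 / (t1 * t3) = (t1 * t3 / t2)⁻¹ by rw [inv_div]]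
      exact one_le_max_inv _ (by positivity)
    rw [sub_le_sub_iff_left, div_le_div_iff_of_pos_left one_pos (lt_of_lt_of_le one_pos ht) (lt_of_lt_of_le one_pos hs)]
end
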